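/- arXiv:2408.09591 — 10 statements merged into one kernel-verified Lean document; each statement's English description precedes it below -/
import Mathlib

section
/- Let G be a finite simple graph and S a set of vertices of G. If there is exactly one minimum vertex cover X of G with S ⊆ X, then the induced subgraph G − S (the subgraph of G induced on V(G) \ S) has exactly one minimum vertex cover, namely X \ S. -/
/-- A vertex cover of a simple graph: a set of vertices containing at least one
endpoint of every edge. -/
def IsVertexCover {V : Type*} (G : SimpleGraph V) (C : Finset V) : Prop :=
  ∀ ⦃u v : V⦄, G.Adj u v → u ∈ C ∨ v ∈ C

/-- A minimum vertex cover: a vertex cover of minimum cardinality. -/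
def IsMinVertexCover {V : Type*} (G : SimpleGraph V) (C : Finset V) : Prop :=
  IsVertexCover G C ∧ ∀ D : Finset V, IsVertexCover G D → C.card ≤ D.card

/-- A vertex cover of the subgraph of `G` induced on the vertex set `W`:
a subset of `W` meeting every edge of `G` with both endpoints in `W`. -/
def IsVertexCoverOn {V : Type*} (G : SimpleGraph V) (W C : Finset V) : Prop :=
  C ⊆ W ∧ ∀ u ∈ W, ∀ v ∈ W, G.Adj u v → u ∈ C ∨ v ∈ C

/-- A minimum vertex cover of the subgraph of `G` induced on `W`. -/
def IsMinVertexCoverOn {V : Type*} (G : SimpleGraph V) (W C : Finset V) : Prop :=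
  IsVertexCoverOn G W C ∧ ∀ D : Finset V, IsVertexCoverOn G W D → C.card ≤ D.card

/-- If `X` is the unique minimum vertex cover of `G` containing `S`, then the induced
subgraph `G - S` (induced on `V(G) \ S`) has exactly one minimum vertex cover,
namely `X \ S`. -/
theorem stmt1 {V : Type*} [Fintype V] [DecidableEq V] (G : SimpleGraph V)
    (S X : Finset V)
    (hX : IsMinVertexCover G X) (hSX : S ⊆ X)
    (huniq : ∀ Y : Finset V, IsMinVertexCover G Y → S ⊆ Y → Y = X) :
    IsMinVertexCoverOn G (Finset.univ \ S) (X \ S) ∧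
      ∀ Y : Finset V, IsMinVertexCoverOn G (Finset.univ \ S) Y → Y = X \ S := by

  classical
  -- Basic facts
  have hXcard : X.card = (X \ S).card + S.card := by
    have := Finset.card_le_card hSX
    rw [Finset.card_sdiff_of_subset hSX]
    omega
  -- any vertex cover on univ \ S gives one of G by adding S
  have key : ∀ D : Finset V, IsVertexCoverOn G (Finset.univ \ S) D →
      IsVertexCover G (D ∪ S) ∧ (D ∪ S).card = D.card + S.card := by
    intro D ⟨hDsub, hDcov⟩
    constructor
    · intro u v huv
      by_cases hu : u ∈ S
      · exact Or.inl (Finset.mem_union_right _ hu)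
      by_cases hv : v ∈ S
      · exact Or.inr (Finset.mem_union_right _ hv)
      rcases hDcov u (by simp [hu]) v (by simp [hv]) huv with h | h
      · exact Or.inl (Finset.mem_union_left _ h)
      · exact Or.inr (Finset.mem_union_left _ h)
    · apply Finset.card_union_of_disjoint
      rw [Finset.disjoint_left]
      intro x hx
      have := hDsub hx
      simp only [Finset.mem_sdiff, Finset.mem_univ, true_and] at this
      simp [this]
  have hXScover : IsVertexCoverOn G (Finset.univ \ S) (X \ S) := by
    refine ⟨fun x hx => ?_, fun u hu v hv huv => ?_⟩
    · simp only [Finset.mem_sdiff] at hx ⊢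
      exact ⟨Finset.mem_univ _, hx.2⟩
    · simp only [Finset.mem_sdiff, Finset.mem_univ, true_and] at hu hv
      rcases hX.1 huv with h | h
      · exact Or.inl (Finset.mem_sdiff.mpr ⟨h, hu⟩)
      · exact Or.inr (Finset.mem_sdiff.mpr ⟨h, hv⟩)
  have hmin : IsMinVertexCoverOn G (Finset.univ \ S) (X \ S) := by
    refine ⟨hXScover, fun D hD => ?_⟩
    obtain ⟨hcov, hcard⟩ := key D hD
    have := hX.2 _ hcov
    omega
  refine ⟨hmin, fun Y hY => ?_⟩
  obtain ⟨hcov, hcard⟩ := key Y hY.1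
  have h1 : (X \ S).card ≤ Y.card := hmin.2 Y hY.1
  have h2 : Y.card ≤ (X \ S).card := hY.2 _ hXScover
  have hYcard : (Y ∪ S).card = X.card := by omega
  have hYmin : IsMinVertexCover G (Y ∪ S) := by
    refine ⟨hcov, fun D hD => ?_⟩
    rw [hYcard]; exact hX.2 D hD
  have hYX : Y ∪ S = X := huniq _ hYmin Finset.subset_union_right
  have hYdisj : ∀ x ∈ Y, x ∉ S := by
    intro x hx
    have := hY.1.1 hx
    simp only [Finset.mem_sdiff, Finset.mem_univ, true_and] at this
    exact this
  ext x
  simp only [Finset.mem_sdiff, ← hYX, Finset.mem_union]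
  constructor
  · intro hx; exact ⟨Or.inl hx, hYdisj x hx⟩
  · rintro ⟨h | h, hs⟩
    · exact h
    · exact absurd h hs
end

section
/- Let G be a finite simple graph whose vertex set is partitioned into a clique A and an independent set B, such that G has no isolated vertices and every vertex of A has at most one neighbor in B. Let A₀ = {a ∈ A : a has no neighbor in B}, and assume A₀ ≠ ∅. Then the minimum vertex cover of G has cardinality |A| − 1, and a set X ⊆ V(G) is a minimum vertex cover of G if and only if X = A \ {v} for some v ∈ A₀. -/
/-- In a split graph with clique `A` and independent set `B`, with no isolated vertices
and every vertex of `A` having at most one neighbor in `B`, if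
`A₀ = {a ∈ A : a has no neighbor in B}` is nonempty, then every minimum vertex cover
has cardinality `|A| - 1`, and the minimum vertex covers are exactly the sets
`A \ {v}` with `v ∈ A₀`. -/
theorem stmt5 {V : Type*} [Fintype V] [DecidableEq V] (G : SimpleGraph V)
    [DecidableRel G.Adj] (A B : Finset V)
    (hAB : Disjoint A B) (hunion : A ∪ B = Finset.univ)
    (hA : ∀ u ∈ A, ∀ v ∈ A, u ≠ v → G.Adj u v)
    (hB : ∀ u ∈ B, ∀ v ∈ B, ¬ G.Adj u v)
    (hiso : ∀ w : V, ∃ u : V, G.Adj w u)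
    (hone : ∀ a ∈ A, (B.filter (fun b => G.Adj a b)).card ≤ 1)
    (hA0 : (A.filter (fun a => ∀ b ∈ B, ¬ G.Adj a b)).Nonempty) :
    (∀ X : Finset V, IsMinVertexCover G X → X.card = A.card - 1) ∧
    (∀ X : Finset V, IsMinVertexCover G X ↔
      ∃ v ∈ A.filter (fun a => ∀ b ∈ B, ¬ G.Adj a b), X = A.erase v) := by
  obtain ⟨v₀, hv₀⟩ := hA0
  rw [Finset.mem_filter] at hv₀
  have memB : ∀ u : V, u ∉ A → u ∈ B := by
    intro u hu
    have := Finset.mem_union.mp (hunion ▸ Finset.mem_univ u)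
    tauto
  have hcover : ∀ v ∈ A, (∀ b ∈ B, ¬ G.Adj v b) → IsVertexCover G (A.erase v) := by
    intro v hv hvB u w huw
    by_cases hu : u ∈ A
    · by_cases huv : u = v
      · subst huv
        by_cases hw : w ∈ A
        · right
          exact Finset.mem_erase.mpr ⟨fun h => G.irrefl (h ▸ huw), hw⟩
        · exact absurd huw (hvB w (memB w hw))
      · left; exact Finset.mem_erase.mpr ⟨huv, hu⟩
    · have hu' := memB u hu
      by_cases hw : w ∈ A
      · by_cases hwv : w = v
        · subst hwv; exact absurd huw.symm (hvB u hu')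
        · right; exact Finset.mem_erase.mpr ⟨hwv, hw⟩
      · exact absurd huw (hB u hu' w (memB w hw))
  have hlow : ∀ X : Finset V, IsVertexCover G X → A.card - 1 ≤ X.card := by
    intro X hX
    have h1 : (A \ X).card ≤ 1 := by
      rw [Finset.card_le_one]
      intro a ha b hb
      by_contra hne
      rcases hX (hA a (Finset.mem_sdiff.mp ha).1 b (Finset.mem_sdiff.mp hb).1 hne) with h | h
      · exact (Finset.mem_sdiff.mp ha).2 h
      · exact (Finset.mem_sdiff.mp hb).2 h
    have h2 : (A ∩ X).card + (A \ X).card = A.card := Finset.card_inter_add_card_sdiff A X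
    have h3 : (A ∩ X).card ≤ X.card := Finset.card_le_card Finset.inter_subset_right
    omega
  have hv₀cover := hcover v₀ hv₀.1 hv₀.2
  have hv₀card : (A.erase v₀).card = A.card - 1 := Finset.card_erase_of_mem hv₀.1
  have hmin : ∀ X : Finset V, IsMinVertexCover G X → X.card = A.card - 1 := by
    intro X ⟨hXc, hXm⟩
    have h1 := hXm _ hv₀cover
    have h2 := hlow X hXc
    omega
  refine ⟨hmin, fun X => ⟨fun hX => ?_, ?_⟩⟩
  · have hcard := hmin X hX
    have hApos : 1 ≤ A.card := Finset.card_pos.mpr ⟨v₀, hv₀.1⟩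
    have hns : ¬ A ⊆ X := fun h => absurd (Finset.card_le_card h) (by omega)
    obtain ⟨v, hvA, hvX⟩ := Finset.not_subset.mp hns
    have hsub : A.erase v ⊆ X := by
      intro a ha
      rw [Finset.mem_erase] at ha
      by_contra haX
      rcases hX.1 (hA a ha.2 v hvA ha.1) with h | h
      · exact haX h
      · exact hvX h
    have hXeq : X = A.erase v := by
      refine (Finset.eq_of_subset_of_card_le hsub ?_).symm
      rw [Finset.card_erase_of_mem hvA]; omega
    refine ⟨v, Finset.mem_filter.mpr ⟨hvA, fun b hb hadj => ?_⟩, hXeq⟩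
    rcases hX.1 hadj with h | h
    · exact hvX h
    · have : b ∈ A := Finset.mem_of_mem_erase (hXeq ▸ h)
      exact absurd hb (Finset.disjoint_left.mp hAB this)
  · rintro ⟨v, hv, rfl⟩
    rw [Finset.mem_filter] at hv
    refine ⟨hcover v hv.1 hv.2, fun D hD => ?_⟩
    have := hlow D hD
    rw [Finset.card_erase_of_mem hv.1]
    omega
end

section
/- Let G be a finite simple graph whose vertex set is partitioned into a clique A and an independent set B, such that G has no isolated vertices and every vertex of A has at most one neighbor in B. Let A₀ = {a ∈ A : a has no neighbor in B}, and assume A₀ ≠ ∅. Then for every v ∈ A₀: (i) A \ {v} is the unique minimum vertex cover of G containing A₀ \ {v}; and (ii) every set S ⊆ V(G) for which there is exactly one minimum vertex cover of G containing S satisfies |S| ≥ |A₀| − 1. Hence A₀ \ {v} is an optimal solution of PAU-VC on G. -/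
/-- In a split graph with clique `A` and independent set `B`, with no isolated vertices
and every vertex of `A` having at most one neighbor in `B`, if
`A₀ = {a ∈ A : a has no neighbor in B}` is nonempty then for every `v ∈ A₀`:
(i) `A \ {v}` is the unique minimum vertex cover containing `A₀ \ {v}`; and
(ii) every set `S` admitting exactly one minimum vertex cover containing it satisfies
`|S| ≥ |A₀| - 1`. Hence `A₀ \ {v}` is an optimal solution of PAU-VC. -/
theorem stmt6 {V : Type*} [Fintype V] [DecidableEq V] (G : SimpleGraph V)
    [DecidableRel G.Adj] (A B : Finset V)
    (hAB : Disjoint A B) (hunion : A ∪ B = Finset.univ)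
    (hA : ∀ u ∈ A, ∀ v ∈ A, u ≠ v → G.Adj u v)
    (hB : ∀ u ∈ B, ∀ v ∈ B, ¬ G.Adj u v)
    (hiso : ∀ w : V, ∃ u : V, G.Adj w u)
    (hone : ∀ a ∈ A, (B.filter (fun b => G.Adj a b)).card ≤ 1)
    (A₀ : Finset V) (hA₀def : A₀ = A.filter (fun a => ∀ b ∈ B, ¬ G.Adj a b))
    (hA₀ : A₀.Nonempty) :
    (∀ v ∈ A₀,
      IsMinVertexCover G (A.erase v) ∧ A₀.erase v ⊆ A.erase v ∧
        ∀ Y : Finset V, IsMinVertexCover G Y → A₀.erase v ⊆ Y → Y = A.erase v) ∧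
    (∀ S : Finset V, (∃! X : Finset V, IsMinVertexCover G X ∧ S ⊆ X) →
      A₀.card - 1 ≤ S.card) := by
  have hA₀A : A₀ ⊆ A := by rw [hA₀def]; exact Finset.filter_subset _ _
  obtain ⟨v₀, hv₀⟩ := hA₀
  have hAne : A.Nonempty := ⟨v₀, hA₀A hv₀⟩
  have hmem : ∀ x : V, x ∈ A ∨ x ∈ B := by
    intro x
    have hx : x ∈ A ∪ B := by rw [hunion]; exact Finset.mem_univ x
    exact Finset.mem_union.mp hx
  have hA₀mem : ∀ a, a ∈ A₀ ↔ a ∈ A ∧ ∀ b ∈ B, ¬ G.Adj a b := by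
    intro a; rw [hA₀def]; simp [Finset.mem_filter]
  -- any cover misses at most one vertex of A
  have hsdle : ∀ C : Finset V, IsVertexCover G C → (A \ C).card ≤ 1 := by
    intro C hC
    by_contra h
    push_neg at h
    obtain ⟨u, hu, w, hw, huw⟩ := Finset.one_lt_card.mp h
    have hadj := hA u (Finset.mem_sdiff.mp hu).1 w (Finset.mem_sdiff.mp hw).1 huw
    rcases hC hadj with h' | h'
    · exact (Finset.mem_sdiff.mp hu).2 h'
    · exact (Finset.mem_sdiff.mp hw).2 h'
  have hlow : ∀ C : Finset V, IsVertexCover G C → A.card ≤ C.card + 1 := by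
    intro C hC
    calc A.card = (A ∩ C).card + (A \ C).card :=
          (Finset.card_inter_add_card_sdiff A C).symm
      _ ≤ C.card + 1 :=
          add_le_add (Finset.card_le_card Finset.inter_subset_right) (hsdle C hC)
  -- A.erase v is a vertex cover for v ∈ A₀
  have hcov : ∀ v ∈ A₀, IsVertexCover G (A.erase v) := by
    intro v hv u w hadj
    have hvA₀ := (hA₀mem v).mp hv
    rcases hmem u with hu | hu
    · by_cases huv : u = v
      · subst huv
        rcases hmem w with hw | hw
        · right
          refine Finset.mem_erase.mpr ⟨?_, hw⟩
          intro hwv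
          subst hwv
          exact G.irrefl hadj
        · exact absurd hadj (hvA₀.2 w hw)
      · exact Or.inl (Finset.mem_erase.mpr ⟨huv, hu⟩)
    · rcases hmem w with hw | hw
      · by_cases hwv : w = v
        · subst hwv
          exact absurd hadj.symm (hvA₀.2 u hu)
        · exact Or.inr (Finset.mem_erase.mpr ⟨hwv, hw⟩)
      · exact absurd hadj (hB u hu w hw)
  have hmin : ∀ v ∈ A₀, IsMinVertexCover G (A.erase v) := by
    intro v hv
    refine ⟨hcov v hv, fun D hD => ?_⟩
    have h1 := hlow D hD
    have h2 : (A.erase v).card = A.card - 1 := Finset.card_erase_of_mem (hA₀A hv)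
    omega
  -- classification of minimum vertex covers
  have hclass : ∀ Y : Finset V, IsMinVertexCover G Y → ∃ w ∈ A₀, Y = A.erase w := by
    intro Y hY
    have hYcard : Y.card = A.card - 1 := by
      have h1 := hY.2 (A.erase v₀) (hcov v₀ hv₀)
      have h2 := hlow Y hY.1
      have h3 : (A.erase v₀).card = A.card - 1 := Finset.card_erase_of_mem (hA₀A hv₀)
      have h4 : 1 ≤ A.card := Finset.card_pos.mpr hAne
      omega
    have hinter : (A ∩ Y).card + (A \ Y).card = A.card :=
      Finset.card_inter_add_card_sdiff A Y
    have hsd := hsdle Y hY.1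
    have hAYle : (A ∩ Y).card ≤ Y.card := Finset.card_le_card Finset.inter_subset_right
    have h4 : 1 ≤ A.card := Finset.card_pos.mpr hAne
    have hsd1 : (A \ Y).card = 1 := by omega
    have hAY : Y.card ≤ (A ∩ Y).card := by omega
    have hYA : Y ⊆ A := by
      have heq : A ∩ Y = Y :=
        Finset.eq_of_subset_of_card_le Finset.inter_subset_right hAY
      intro y hy
      rw [← heq] at hy
      exact (Finset.mem_inter.mp hy).1
    obtain ⟨w, hw⟩ := Finset.card_eq_one.mp hsd1
    have hwmem : w ∈ A \ Y := by rw [hw]; exact Finset.mem_singleton_self w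
    have hwA : w ∈ A := (Finset.mem_sdiff.mp hwmem).1
    have hwY : w ∉ Y := (Finset.mem_sdiff.mp hwmem).2
    have hYeq : Y = A.erase w := by
      apply Finset.Subset.antisymm
      · intro y hy
        exact Finset.mem_erase.mpr ⟨fun h => hwY (h ▸ hy), hYA hy⟩
      · intro y hy
        obtain ⟨hyw, hyA⟩ := Finset.mem_erase.mp hy
        by_contra hyY
        have hmem' : y ∈ A \ Y := Finset.mem_sdiff.mpr ⟨hyA, hyY⟩
        rw [hw] at hmem'
        exact hyw (Finset.mem_singleton.mp hmem')
    refine ⟨w, ?_, hYeq⟩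
    rw [hA₀mem]
    refine ⟨hwA, fun b hb hadj => ?_⟩
    rcases hY.1 hadj with h' | h'
    · exact hwY h'
    · exact (Finset.disjoint_left.mp hAB (hYA h')) hb
  constructor
  · intro v hv
    refine ⟨hmin v hv, Finset.erase_subset_erase v hA₀A, ?_⟩
    intro Y hY hsub
    obtain ⟨w, hwA₀, rfl⟩ := hclass Y hY
    by_cases hwv : w = v
    · rw [hwv]
    · have hw' : w ∈ A₀.erase v := Finset.mem_erase.mpr ⟨hwv, hwA₀⟩
      exact absurd (hsub hw') (Finset.notMem_erase w A)
  · intro S hS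
    obtain ⟨X, ⟨hXmin, hSX⟩, huniq⟩ := hS
    obtain ⟨w, hwA₀, rfl⟩ := hclass X hXmin
    have hSA : S ⊆ A := hSX.trans (Finset.erase_subset w A)
    by_contra h
    push_neg at h
    have hcup : A₀.card ≤ (A₀ \ S).card + S.card := by
      have h1 : A₀ ⊆ A₀ ∪ S := Finset.subset_union_left
      have h2 : (A₀ \ S).card + S.card = (A₀ ∪ S).card := Finset.card_sdiff_add_card A₀ S
      have h3 := Finset.card_le_card h1
      omega
    have h2lt : 1 < (A₀ \ S).card := by omega
    obtain ⟨u, hu, u', hu', huu⟩ := Finset.one_lt_card.mp h2lt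
    have huA₀ : u ∈ A₀ := (Finset.mem_sdiff.mp hu).1
    have huS : u ∉ S := (Finset.mem_sdiff.mp hu).2
    have hu'A₀ : u' ∈ A₀ := (Finset.mem_sdiff.mp hu').1
    have hu'S : u' ∉ S := (Finset.mem_sdiff.mp hu').2
    have hsub : ∀ x : V, x ∉ S → S ⊆ A.erase x := by
      intro x hx s hs
      exact Finset.mem_erase.mpr ⟨fun hsx => hx (hsx ▸ hs), hSA hs⟩
    have e1 := huniq (A.erase u) ⟨hmin u huA₀, hsub u huS⟩
    have e2 := huniq (A.erase u') ⟨hmin u' hu'A₀, hsub u' hu'S⟩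
    have e3 : A.erase u = A.erase u' := e1.trans e2.symm
    have hmem' : u ∈ A.erase u' := Finset.mem_erase.mpr ⟨huu, hA₀A huA₀⟩
    rw [← e3] at hmem'
    exact Finset.notMem_erase u A hmem'
end

section
/- Let G be a finite simple graph whose vertex set is partitioned into a clique A and an independent set B, such that G has no isolated vertices and every vertex a ∈ A has exactly one neighbor v_a in B. Then the minimum vertex cover of G has cardinality |A|, and a set X ⊆ V(G) is a minimum vertex cover of G if and only if X = A or X = (A \ {a}) ∪ {v_a} for some a ∈ A. -/
/-- In a split graph with clique `A` and independent set `B`, with no isolated vertices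
and every vertex `a ∈ A` having exactly one neighbor `f a` in `B`, the minimum vertex
cover has cardinality `|A|`, and the minimum vertex covers are exactly `A` and the
sets `(A \ {a}) ∪ {f a}` for `a ∈ A`. -/
theorem stmt7 {V : Type*} [Fintype V] [DecidableEq V] (G : SimpleGraph V)
    [DecidableRel G.Adj] (A B : Finset V)
    (hAB : Disjoint A B) (hunion : A ∪ B = Finset.univ)
    (hA : ∀ u ∈ A, ∀ v ∈ A, u ≠ v → G.Adj u v)
    (hB : ∀ u ∈ B, ∀ v ∈ B, ¬ G.Adj u v)
    (hiso : ∀ w : V, ∃ u : V, G.Adj w u)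
    (f : V → V)
    (hf : ∀ a ∈ A, f a ∈ B ∧ G.Adj a (f a) ∧ ∀ b ∈ B, G.Adj a b → b = f a) :
    (∀ X : Finset V, IsMinVertexCover G X → X.card = A.card) ∧
    (∀ X : Finset V, IsMinVertexCover G X ↔
      (X = A ∨ ∃ a ∈ A, X = insert (f a) (A.erase a))) := by
  classical
  have memAB : ∀ v : V, v ∈ A ∨ v ∈ B := by
    intro v
    have : v ∈ A ∪ B := by rw [hunion]; exact Finset.mem_univ v
    simpa [Finset.mem_union] using this
  have coverA : IsVertexCover G A := by
    intro u v huv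
    rcases memAB u with hu | hu
    · exact Or.inl hu
    rcases memAB v with hv | hv
    · exact Or.inr hv
    · exact absurd huv (hB u hu v hv)
  have cardIns : ∀ a ∈ A, (insert (f a) (A.erase a)).card = A.card := by
    intro a ha
    have hfB := (hf a ha).1
    have hfA : f a ∉ A := fun h => (Finset.disjoint_left.mp hAB h hfB)
    rw [Finset.card_insert_of_notMem (fun h => hfA (Finset.mem_of_mem_erase h)),
        Finset.card_erase_of_mem ha]
    exact Nat.succ_pred_eq_of_pos (Finset.card_pos.mpr ⟨a, ha⟩)
  have struct : ∀ X : Finset V, IsVertexCover G X →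
      A ⊆ X ∨ ∃ a ∈ A, a ∉ X ∧ insert (f a) (A.erase a) ⊆ X := by
    intro X hX
    by_cases hsub : A ⊆ X
    · exact Or.inl hsub
    · rw [Finset.not_subset] at hsub
      obtain ⟨a, ha, haX⟩ := hsub
      refine Or.inr ⟨a, ha, haX, ?_⟩
      intro x hx
      rcases Finset.mem_insert.mp hx with rfl | hx
      · rcases hX (hf a ha).2.1 with h | h
        · exact absurd h haX
        · exact h
      · have hxA := Finset.mem_of_mem_erase hx
        have hne := Finset.ne_of_mem_erase hx
        rcases hX (hA x hxA a ha hne) with h | h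
        · exact h
        · exact absurd h haX
  have lower : ∀ X : Finset V, IsVertexCover G X → A.card ≤ X.card := by
    intro X hX
    rcases struct X hX with h | ⟨a, ha, _, hsub⟩
    · exact Finset.card_le_card h
    · calc A.card = (insert (f a) (A.erase a)).card := (cardIns a ha).symm
        _ ≤ X.card := Finset.card_le_card hsub
  have minA : IsMinVertexCover G A := ⟨coverA, lower⟩
  constructor
  · intro X hX
    exact le_antisymm (hX.2 A coverA) (lower X hX.1)
  · intro X
    constructor
    · intro hX
      have hcard : X.card = A.card := le_antisymm (hX.2 A coverA) (lower X hX.1)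
      rcases struct X hX.1 with h | ⟨a, ha, _, hsub⟩
      · exact Or.inl ((Finset.eq_of_subset_of_card_le h hcard.le).symm)
      · exact Or.inr ⟨a, ha,
          (Finset.eq_of_subset_of_card_le hsub (by rw [hcard, cardIns a ha])).symm⟩
    · rintro (rfl | ⟨a, ha, rfl⟩)
      · exact minA
      · refine ⟨?_, ?_⟩
        · intro u v huv
          have key : ∀ w x : V, G.Adj w x → w ∈ A →
              w ∈ insert (f a) (A.erase a) ∨ x ∈ insert (f a) (A.erase a) := by
            intro w x hwx hwA
            by_cases hwa : w = a
            · subst hwa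
              rcases memAB x with hxA | hxB
              · have hne : x ≠ w := fun h => G.loopless.irrefl w (h ▸ hwx)
                exact Or.inr (Finset.mem_insert_of_mem (Finset.mem_erase.mpr ⟨hne, hxA⟩))
              · have hx := (hf w hwA).2.2 x hxB hwx
                rw [hx]
                exact Or.inr (Finset.mem_insert_self _ _)
            · exact Or.inl (Finset.mem_insert_of_mem (Finset.mem_erase.mpr ⟨hwa, hwA⟩))
          rcases memAB u with hu | hu
          · exact key u v huv hu
          rcases memAB v with hv | hv
          · exact (key v u huv.symm hv).symm
          · exact absurd huv (hB u hu v hv)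
        · intro D hD
          rw [cardIns a ha]
          exact lower D hD
end

section
/- Let G be a finite simple graph whose vertex set is partitioned into a clique A and an independent set B, such that G has no isolated vertices and every vertex of A has exactly one neighbor in B. Then no minimum vertex cover of G contains two distinct vertices of B. -/
/-- In a split graph with clique `A` and independent set `B`, with no isolated vertices
and every vertex of `A` having exactly one neighbor in `B`, no minimum vertex cover
contains two distinct vertices of `B`. -/
theorem stmt8 {V : Type*} [Fintype V] [DecidableEq V] (G : SimpleGraph V)
    [DecidableRel G.Adj] (A B : Finset V)
    (hAB : Disjoint A B) (hunion : A ∪ B = Finset.univ)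
    (hA : ∀ u ∈ A, ∀ v ∈ A, u ≠ v → G.Adj u v)
    (hB : ∀ u ∈ B, ∀ v ∈ B, ¬ G.Adj u v)
    (hiso : ∀ w : V, ∃ u : V, G.Adj w u)
    (hone : ∀ a ∈ A, ∃! b : V, b ∈ B ∧ G.Adj a b)
    (X : Finset V) (hX : IsMinVertexCover G X) :
    ∀ b₁ ∈ B, ∀ b₂ ∈ B, b₁ ∈ X → b₂ ∈ X → b₁ = b₂ := by
  intro b₁ hb₁ b₂ hb₂ hb₁X hb₂X
  by_contra hne
  obtain ⟨hXc, hXmin⟩ := hX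
  have key : ∀ b ∈ B, b ∈ X → (∀ v, G.Adj b v → v ∈ X ∧ v ≠ b) → False := by
    intro b hbB hbX hnb
    have hcov : IsVertexCover G (X.erase b) := by
      intro u v huv
      rcases hXc huv with hu | hv
      · by_cases h : u = b
        · subst h
          obtain ⟨hvX, hvb⟩ := hnb v huv
          exact Or.inr (Finset.mem_erase.mpr ⟨hvb, hvX⟩)
        · exact Or.inl (Finset.mem_erase.mpr ⟨h, hu⟩)
      · by_cases h : v = b
        · subst h
          obtain ⟨huX, hub⟩ := hnb u huv.symm
          exact Or.inl (Finset.mem_erase.mpr ⟨hub, huX⟩)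
        · exact Or.inr (Finset.mem_erase.mpr ⟨h, hv⟩)
    have h1 := hXmin _ hcov
    have h2 : (X.erase b).card < X.card := Finset.card_erase_lt_of_mem hbX
    omega
  by_cases hAX : ∀ a ∈ A, a ∈ X
  · apply key b₁ hb₁ hb₁X
    intro v hv
    have hvV : v ∈ A ∪ B := by rw [hunion]; exact Finset.mem_univ v
    rcases Finset.mem_union.mp hvV with hvA | hvB
    · exact ⟨hAX v hvA, fun h => (Finset.disjoint_left.mp hAB hvA) (h ▸ hb₁)⟩
    · exact absurd hv (hB b₁ hb₁ v hvB)
  · push_neg at hAX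
    obtain ⟨a, haA, haX⟩ := hAX
    obtain ⟨b, ⟨hbB, hab⟩, hbuniq⟩ := hone a haA
    have hA'X : ∀ a' ∈ A, a' ≠ a → a' ∈ X := by
      intro a' ha' hne'
      rcases hXc (hA a' ha' a haA hne') with h | h
      · exact h
      · exact absurd h haX
    have hex : ∃ b', b' ∈ B ∧ b' ∈ X ∧ b' ≠ b := by
      by_cases h1 : b₁ = b
      · exact ⟨b₂, hb₂, hb₂X, fun h => hne (h1.trans h.symm)⟩
      · exact ⟨b₁, hb₁, hb₁X, h1⟩
    obtain ⟨b', hb'B, hb'X, hb'b⟩ := hex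
    apply key b' hb'B hb'X
    intro v hv
    have hvV : v ∈ A ∪ B := by rw [hunion]; exact Finset.mem_univ v
    rcases Finset.mem_union.mp hvV with hvA | hvB
    · refine ⟨hA'X v hvA ?_, fun h => (Finset.disjoint_left.mp hAB hvA) (h ▸ hb'B)⟩
      intro h; subst h
      exact hb'b (hbuniq b' ⟨hb'B, hv.symm⟩)
    · exact absurd hv (hB b' hb'B v hvB)
end

section
/- Let G be a finite simple graph whose vertex set is partitioned into a clique A and an independent set B, such that G has no isolated vertices and every vertex of A has exactly one neighbor in B. Let b ∈ B and v ∈ N_G(b). Then (A \ {v}) ∪ {b} is the unique minimum vertex cover of G containing the set S = (N_G(b) \ {v}) ∪ {b}. -/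
/-- In a split graph with clique `A` and independent set `B`, with no isolated vertices
and every vertex of `A` having exactly one neighbor in `B`, for `b ∈ B` and
`v ∈ N_G(b)`, the set `(A \ {v}) ∪ {b}` is the unique minimum vertex cover of `G`
containing `S = (N_G(b) \ {v}) ∪ {b}`. -/
theorem stmt9 {V : Type*} [Fintype V] [DecidableEq V] (G : SimpleGraph V)
    [DecidableRel G.Adj] (A B : Finset V)
    (hAB : Disjoint A B) (hunion : A ∪ B = Finset.univ)
    (hA : ∀ u ∈ A, ∀ v ∈ A, u ≠ v → G.Adj u v)
    (hB : ∀ u ∈ B, ∀ v ∈ B, ¬ G.Adj u v)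
    (hiso : ∀ w : V, ∃ u : V, G.Adj w u)
    (hone : ∀ a ∈ A, ∃! b : V, b ∈ B ∧ G.Adj a b)
    (b : V) (hb : b ∈ B) (v : V) (hv : v ∈ G.neighborFinset b) :
    IsMinVertexCover G (insert b (A.erase v)) ∧
    insert b ((G.neighborFinset b).erase v) ⊆ insert b (A.erase v) ∧
    ∀ Y : Finset V, IsMinVertexCover G Y →
      insert b ((G.neighborFinset b).erase v) ⊆ Y → Y = insert b (A.erase v) := by
  have hadj : G.Adj b v := by simpa using hv
  have hmemU : ∀ x : V, x ∈ A ∪ B := fun x => hunion ▸ Finset.mem_univ x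
  have hNb : ∀ x, G.Adj b x → x ∈ A := by
    intro x hx
    rcases Finset.mem_union.1 (hmemU x) with h | h
    · exact h
    · exact absurd hx (hB b hb x h)
  have hvA : v ∈ A := hNb v hadj
  have hbA : b ∉ A := fun h => (Finset.disjoint_left.1 hAB h) hb
  have hApos : 1 ≤ A.card := Finset.card_pos.2 ⟨v, hvA⟩
  -- cardinality of the candidate cover
  have hCcard : (insert b (A.erase v)).card = A.card := by
    rw [Finset.card_insert_of_notMem (fun h => hbA (Finset.mem_erase.1 h).2),
        Finset.card_erase_of_mem hvA]
    omega
  -- it is a vertex cover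
  have hCcover : IsVertexCover G (insert b (A.erase v)) := by
    intro x y hxy
    rcases Finset.mem_union.1 (hmemU x) with hxA | hxB
    · by_cases hxv : x = v
      · subst hxv
        rcases Finset.mem_union.1 (hmemU y) with hyA | hyB
        · right
          exact Finset.mem_insert_of_mem (Finset.mem_erase.2 ⟨fun h => hxy.ne' h, hyA⟩)
        · -- y is the unique B-neighbor of v, so y = b
          obtain ⟨b0, hb0, huniq⟩ := hone x hxA
          have h1 : y = b0 := huniq y ⟨hyB, hxy⟩
          have h2 : b = b0 := huniq b ⟨hb, hadj.symm⟩
          right; rw [h1, ← h2]; exact Finset.mem_insert_self _ _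
      · left
        exact Finset.mem_insert_of_mem (Finset.mem_erase.2 ⟨hxv, hxA⟩)
    · rcases Finset.mem_union.1 (hmemU y) with hyA | hyB
      · by_cases hyv : y = v
        · subst hyv
          obtain ⟨b0, hb0, huniq⟩ := hone y hyA
          have h1 : x = b0 := huniq x ⟨hxB, hxy.symm⟩
          have h2 : b = b0 := huniq b ⟨hb, hadj.symm⟩
          left; rw [h1, ← h2]; exact Finset.mem_insert_self _ _
        · right
          exact Finset.mem_insert_of_mem (Finset.mem_erase.2 ⟨hyv, hyA⟩)
      · exact absurd hxy (hB x hxB y hyB)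
  -- lower bound: every cover has at least A.card vertices
  have hlb : ∀ D : Finset V, IsVertexCover G D → A.card ≤ D.card := by
    intro D hD
    by_cases hAD : A ⊆ D
    · exact Finset.card_le_card hAD
    · obtain ⟨a0, ha0A, ha0D⟩ := Finset.not_subset.1 hAD
      obtain ⟨b0, ⟨hb0B, hab0⟩, _⟩ := hone a0 ha0A
      have hb0D : b0 ∈ D := by
        rcases hD hab0 with h | h
        · exact absurd h ha0D
        · exact h
      have hb0A : b0 ∉ A := fun h => (Finset.disjoint_left.1 hAB h) hb0B
      have hsub : insert b0 (A.erase a0) ⊆ D := by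
        intro x hx
        rcases Finset.mem_insert.1 hx with rfl | hx
        · exact hb0D
        · obtain ⟨hxa, hxA⟩ := Finset.mem_erase.1 hx
          rcases hD (hA x hxA a0 ha0A hxa) with h | h
          · exact h
          · exact absurd h ha0D
      have : (insert b0 (A.erase a0)).card = A.card := by
        rw [Finset.card_insert_of_notMem (fun h => hb0A (Finset.mem_erase.1 h).2),
            Finset.card_erase_of_mem ha0A]
        have := Finset.card_pos.2 ⟨a0, ha0A⟩
        omega
      calc A.card = (insert b0 (A.erase a0)).card := this.symm
        _ ≤ D.card := Finset.card_le_card hsub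
  have hCmin : IsMinVertexCover G (insert b (A.erase v)) := by
    refine ⟨hCcover, fun D hD => ?_⟩
    rw [hCcard]; exact hlb D hD
  refine ⟨hCmin, ?_, ?_⟩
  · intro x hx
    rcases Finset.mem_insert.1 hx with rfl | hx
    · exact Finset.mem_insert_self _ _
    · obtain ⟨hxv, hxN⟩ := Finset.mem_erase.1 hx
      exact Finset.mem_insert_of_mem
        (Finset.mem_erase.2 ⟨hxv, hNb x (by simpa using hxN)⟩)
  · intro Y hY hSY
    have hYcard : Y.card ≤ A.card := by
      have := hY.2 _ hCcover
      rwa [hCcard] at this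
    have hbY : b ∈ Y := hSY (Finset.mem_insert_self _ _)
    have hCY : insert b (A.erase v) ⊆ Y := by
      intro x hx
      rcases Finset.mem_insert.1 hx with rfl | hx
      · exact hbY
      · obtain ⟨hxv, hxA⟩ := Finset.mem_erase.1 hx
        by_contra hxY
        -- all of A except x is in Y
        have hAsub : A.erase x ⊆ Y := by
          intro y hy
          obtain ⟨hyx, hyA⟩ := Finset.mem_erase.1 hy
          rcases hY.1 (hA y hyA x hxA hyx) with h | h
          · exact h
          · exact absurd h hxY
        obtain ⟨b0, ⟨hb0B, hxb0⟩, _⟩ := hone x hxA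
        have hb0Y : b0 ∈ Y := by
          rcases hY.1 hxb0 with h | h
          · exact absurd h hxY
          · exact h
        have hb0A : b0 ∉ A := fun h => (Finset.disjoint_left.1 hAB h) hb0B
        by_cases hb0b : b0 = b
        · -- then x is adjacent to b and x ≠ v, so x ∈ S ⊆ Y, contradiction
          subst hb0b
          exact hxY (hSY (Finset.mem_insert_of_mem
            (Finset.mem_erase.2 ⟨hxv, by simpa using hxb0.symm⟩)))
        · -- Y contains b, b0 and A \ {x} : too big
          have hsub : insert b (insert b0 (A.erase x)) ⊆ Y := by
            intro y hy
            rcases Finset.mem_insert.1 hy with rfl | hy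
            · exact hbY
            rcases Finset.mem_insert.1 hy with rfl | hy
            · exact hb0Y
            · exact hAsub hy
          have hcard : (insert b (insert b0 (A.erase x))).card = A.card + 1 := by
            rw [Finset.card_insert_of_notMem, Finset.card_insert_of_notMem,
                Finset.card_erase_of_mem hxA]
            · have := Finset.card_pos.2 ⟨x, hxA⟩
              omega
            · exact fun h => hb0A (Finset.mem_erase.1 h).2
            · intro h
              rcases Finset.mem_insert.1 h with h | h
              · exact hb0b h.symm
              · exact hbA (Finset.mem_erase.1 h).2
          have := Finset.card_le_card hsub
          omega
    exact (Finset.eq_of_subset_of_card_le hCY (hYcard.trans_eq hCcard.symm)).symm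
end

section
/- Let G be a finite simple graph whose vertex set is partitioned into a clique A and an independent set B, such that G has no isolated vertices and every vertex of A has exactly one neighbor in B. If T ⊆ V(G) is disjoint from B and there is exactly one minimum vertex cover of G containing T, then T = A. -/
/-- In a split graph with clique `A` and independent set `B`, with no isolated vertices
and every vertex of `A` having exactly one neighbor in `B`, if `T` is disjoint from `B`
and there is exactly one minimum vertex cover of `G` containing `T`, then `T = A`. -/
theorem stmt10 {V : Type*} [Fintype V] [DecidableEq V] (G : SimpleGraph V)
    [DecidableRel G.Adj] (A B : Finset V)
    (hAB : Disjoint A B) (hunion : A ∪ B = Finset.univ)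
    (hA : ∀ u ∈ A, ∀ v ∈ A, u ≠ v → G.Adj u v)
    (hB : ∀ u ∈ B, ∀ v ∈ B, ¬ G.Adj u v)
    (hiso : ∀ w : V, ∃ u : V, G.Adj w u)
    (hone : ∀ a ∈ A, ∃! b : V, b ∈ B ∧ G.Adj a b)
    (T : Finset V) (hTB : Disjoint T B)
    (huniq : ∃! X : Finset V, IsMinVertexCover G X ∧ T ⊆ X) :
    T = A := by
  obtain ⟨X, ⟨hX, hTX⟩, hXuniq⟩ := huniq
  have hTA : T ⊆ A := by
    intro t ht
    have h : t ∈ A ∪ B := hunion ▸ Finset.mem_univ t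
    rcases Finset.mem_union.1 h with h | h
    · exact h
    · exact absurd h (Finset.disjoint_left.1 hTB ht)
  have hAcov : IsVertexCover G A := by
    intro u v huv
    have hu : u ∈ A ∪ B := hunion ▸ Finset.mem_univ u
    have hv : v ∈ A ∪ B := hunion ▸ Finset.mem_univ v
    rcases Finset.mem_union.1 hu with h | h
    · exact Or.inl h
    rcases Finset.mem_union.1 hv with h' | h'
    · exact Or.inr h'
    · exact absurd huv (hB u h v h')
  have hmin : ∀ D : Finset V, IsVertexCover G D → A.card ≤ D.card := by
    intro D hD
    by_cases hAD : A ⊆ D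
    · exact Finset.card_le_card hAD
    · obtain ⟨a, haA, haD⟩ := Finset.not_subset.1 hAD
      obtain ⟨b, ⟨hbB, hab⟩, hbu⟩ := hone a haA
      have hsub : insert b (A.erase a) ⊆ D := by
        intro x hx
        rcases Finset.mem_insert.1 hx with rfl | hx
        · rcases hD hab with h | h
          · exact absurd h haD
          · exact h
        · have hxA := Finset.mem_of_mem_erase hx
          have hxa := Finset.ne_of_mem_erase hx
          rcases hD (hA a haA x hxA (Ne.symm hxa)) with h | h
          · exact absurd h haD
          · exact h
      have hbA : b ∉ A.erase a := fun hb =>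
        Finset.disjoint_left.1 hAB (Finset.mem_of_mem_erase hb) hbB
      have hcard : (insert b (A.erase a)).card = A.card := by
        rw [Finset.card_insert_of_notMem hbA, Finset.card_erase_of_mem haA]
        have : 1 ≤ A.card := Finset.card_pos.2 ⟨a, haA⟩
        omega
      calc A.card = (insert b (A.erase a)).card := hcard.symm
        _ ≤ D.card := Finset.card_le_card hsub
  have hXA : X = A := (hXuniq A ⟨⟨hAcov, hmin⟩, hTA⟩).symm
  apply Finset.Subset.antisymm hTA
  intro a haA
  by_contra haT
  obtain ⟨b, ⟨hbB, hab⟩, hbu⟩ := hone a haA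
  set C := insert b (A.erase a) with hC
  have hCcov : IsVertexCover G C := by
    intro u v huv
    have key : ∀ x y : V, G.Adj x y → x ∈ A → x ∈ C ∨ y ∈ C := by
      intro x y hxy hxA
      by_cases hxa : x = a
      · subst hxa
        have hy : y ∈ A ∪ B := hunion ▸ Finset.mem_univ y
        rcases Finset.mem_union.1 hy with h | h
        · exact Or.inr (Finset.mem_insert_of_mem
            (Finset.mem_erase.2 ⟨(G.ne_of_adj hxy).symm, h⟩))
        · have : y = b := hbu y ⟨h, hxy⟩
          exact Or.inr (this ▸ Finset.mem_insert_self b _)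
      · exact Or.inl (Finset.mem_insert_of_mem (Finset.mem_erase.2 ⟨hxa, hxA⟩))
    have hu : u ∈ A ∪ B := hunion ▸ Finset.mem_univ u
    have hv : v ∈ A ∪ B := hunion ▸ Finset.mem_univ v
    rcases Finset.mem_union.1 hu with h | h
    · exact key u v huv h
    rcases Finset.mem_union.1 hv with h' | h'
    · exact (key v u huv.symm h').symm
    · exact absurd huv (hB u h v h')
  have hbA : b ∉ A.erase a := fun hb =>
    Finset.disjoint_left.1 hAB (Finset.mem_of_mem_erase hb) hbB
  have hcard : C.card = A.card := by
    rw [hC, Finset.card_insert_of_notMem hbA, Finset.card_erase_of_mem haA]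
    have : 1 ≤ A.card := Finset.card_pos.2 ⟨a, haA⟩
    omega
  have hCmin : IsMinVertexCover G C :=
    ⟨hCcov, fun D hD => hcard ▸ hmin D hD⟩
  have hTC : T ⊆ C := by
    intro t ht
    exact Finset.mem_insert_of_mem
      (Finset.mem_erase.2 ⟨fun h => haT (h ▸ ht), hTA ht⟩)
  have hCA : C = A := (hXuniq C ⟨hCmin, hTC⟩).trans hXA
  have : b ∈ A := hCA ▸ Finset.mem_insert_self b (A.erase a)
  exact Finset.disjoint_left.1 hAB this hbB
end

section
/- Let G be a finite simple graph whose vertex set is partitioned into a clique A and an independent set B, such that G has no isolated vertices and every vertex of A has exactly one neighbor in B. If T ⊆ V(G) meets B and there is exactly one minimum vertex cover of G containing T, then T ∩ B = {b} for a single vertex b ∈ B, T excludes at most one vertex of N_G(b), and consequently |T| ≥ |N_G(b)|. -/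
/-- In a split graph with clique `A` and independent set `B`, with no isolated vertices
and every vertex of `A` having exactly one neighbor in `B`, if `T` meets `B` and there
is exactly one minimum vertex cover of `G` containing `T`, then `T ∩ B = {b}` for a
single vertex `b ∈ B`, `T` excludes at most one vertex of `N_G(b)`, and consequently
`|T| ≥ |N_G(b)|`. -/
theorem stmt11 {V : Type*} [Fintype V] [DecidableEq V] (G : SimpleGraph V)
    [DecidableRel G.Adj] (A B : Finset V)
    (hAB : Disjoint A B) (hunion : A ∪ B = Finset.univ)
    (hA : ∀ u ∈ A, ∀ v ∈ A, u ≠ v → G.Adj u v)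
    (hB : ∀ u ∈ B, ∀ v ∈ B, ¬ G.Adj u v)
    (hiso : ∀ w : V, ∃ u : V, G.Adj w u)
    (hone : ∀ a ∈ A, ∃! b : V, b ∈ B ∧ G.Adj a b)
    (T : Finset V) (hTB : (T ∩ B).Nonempty)
    (huniq : ∃! X : Finset V, IsMinVertexCover G X ∧ T ⊆ X) :
    ∃ b ∈ B, T ∩ B = {b} ∧ (G.neighborFinset b \ T).card ≤ 1 ∧
      (G.neighborFinset b).card ≤ T.card := by
  classical
  obtain ⟨b0, hb0⟩ := hTB
  obtain ⟨hb0T, hb0B⟩ := Finset.mem_inter.mp hb0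
  obtain ⟨X, ⟨⟨hXcov, hXmin⟩, hTX⟩, hXuniq⟩ := huniq
  have hmem : ∀ v : V, v ∈ A ∨ v ∈ B := fun v =>
    Finset.mem_union.mp (hunion ▸ Finset.mem_univ v)
  have hAB' : ∀ v ∈ A, v ∉ B := fun v hv => Finset.disjoint_left.mp hAB hv
  -- A is a vertex cover
  have hAcov : IsVertexCover G A := by
    intro u v huv
    rcases hmem u with h | h
    · exact Or.inl h
    · rcases hmem v with h' | h'
      · exact Or.inr h'
      · exact absurd huv (hB u h v h')
  -- neighbors of B vertices lie in A
  have hNB : ∀ b ∈ B, ∀ v, G.Adj b v → v ∈ A := by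
    intro b hb v hv
    rcases hmem v with h | h
    · exact h
    · exact absurd hv (hB b hb v h)
  -- for a ∈ A adjacent to b' ∈ B, (A \ {a}) ∪ {b'} is a vertex cover
  have hCa : ∀ a ∈ A, ∀ b', b' ∈ B → G.Adj a b' →
      IsVertexCover G (insert b' (A.erase a)) := by
    intro a ha b' hb' hab' u v huv
    have key : ∀ w, G.Adj a w → w ∈ insert b' (A.erase a) := by
      intro w hw
      rcases hmem w with h | h
      · exact Finset.mem_insert_of_mem
          (Finset.mem_erase.mpr ⟨(G.ne_of_adj hw).symm, h⟩)
      · obtain ⟨bb, hbb, hbun⟩ := hone a ha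
        have h1 : w = bb := hbun w ⟨h, hw⟩
        have h2 : b' = bb := hbun b' ⟨hb', hab'⟩
        exact Finset.mem_insert.mpr (Or.inl (h1.trans h2.symm))
    by_cases hu : u = a
    · exact Or.inr (key v (hu ▸ huv))
    by_cases hv : v = a
    · exact Or.inl (key u (hv ▸ huv.symm))
    rcases hmem u with h | h
    · exact Or.inl (Finset.mem_insert_of_mem (Finset.mem_erase.mpr ⟨hu, h⟩))
    rcases hmem v with h' | h'
    · exact Or.inr (Finset.mem_insert_of_mem (Finset.mem_erase.mpr ⟨hv, h'⟩))
    · exact absurd huv (hB u h v h')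
  -- every vertex cover has at least |A| vertices
  have hlow : ∀ D : Finset V, IsVertexCover G D → A.card ≤ D.card := by
    intro D hD
    by_cases hAD : A ⊆ D
    · exact Finset.card_le_card hAD
    · obtain ⟨a, ha, haD⟩ := Finset.not_subset.mp hAD
      obtain ⟨bb, ⟨hbbB, hadj⟩, _⟩ := hone a ha
      have hbbD : bb ∈ D := by
        rcases hD hadj with h | h
        · exact absurd h haD
        · exact h
      have hsub : insert bb (A.erase a) ⊆ D := by
        intro x hx
        rcases Finset.mem_insert.mp hx with h | h
        · exact h ▸ hbbD
        · obtain ⟨hxa, hxA⟩ := Finset.mem_erase.mp h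
          rcases hD (hA x hxA a ha hxa) with h' | h'
          · exact h'
          · exact absurd h' haD
      have hc : (insert bb (A.erase a)).card = A.card := by
        rw [Finset.card_insert_of_notMem
            (fun h => hAB' _ (Finset.mem_of_mem_erase h) hbbB),
          Finset.card_erase_of_mem ha]
        have : 0 < A.card := Finset.card_pos.mpr ⟨a, ha⟩
        omega
      calc A.card = (insert bb (A.erase a)).card := hc.symm
        _ ≤ D.card := Finset.card_le_card hsub
  have hXcard : X.card = A.card := le_antisymm (hXmin A hAcov) (hlow X hXcov)
  -- A is not contained in X
  have hnsub : ¬ A ⊆ X := by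
    intro h
    have : A = X := Finset.eq_of_subset_of_card_le h (hXcard.le)
    exact hAB' b0 (this ▸ hTX hb0T) hb0B
  obtain ⟨a, ha, haX⟩ := Finset.not_subset.mp hnsub
  obtain ⟨bb, ⟨hbbB, hadj⟩, hbbun⟩ := hone a ha
  have hbbX : bb ∈ X := by
    rcases hXcov hadj with h | h
    · exact absurd h haX
    · exact h
  have hsubX : insert bb (A.erase a) ⊆ X := by
    intro x hx
    rcases Finset.mem_insert.mp hx with h | h
    · exact h ▸ hbbX
    · obtain ⟨hxa, hxA⟩ := Finset.mem_erase.mp h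
      rcases hXcov (hA x hxA a ha hxa) with h' | h'
      · exact h'
      · exact absurd h' haX
  have hcardC : (insert bb (A.erase a)).card = A.card := by
    rw [Finset.card_insert_of_notMem
        (fun h => hAB' _ (Finset.mem_of_mem_erase h) hbbB),
      Finset.card_erase_of_mem ha]
    have : 0 < A.card := Finset.card_pos.mpr ⟨a, ha⟩
    omega
  have hXeq : X = insert bb (A.erase a) :=
    (Finset.eq_of_subset_of_card_le hsubX (by rw [hcardC, hXcard])).symm
  -- X ∩ B = {bb}
  have hXB : X ∩ B = {bb} := by
    rw [hXeq]
    ext x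
    simp only [Finset.mem_inter, Finset.mem_insert, Finset.mem_erase,
      Finset.mem_singleton]
    constructor
    · rintro ⟨h | ⟨_, hxA⟩, hxB⟩
      · exact h
      · exact absurd hxB (hAB' x hxA)
    · rintro rfl
      exact ⟨Or.inl rfl, hbbB⟩
  have hb0bb : b0 = bb := by
    have hx : b0 ∈ X ∩ B := Finset.mem_inter.mpr ⟨hTX hb0T, hb0B⟩
    rw [hXB, Finset.mem_singleton] at hx
    exact hx
  subst hb0bb
  -- T ∩ B = {b0}
  have hTBeq : T ∩ B = {b0} := by
    apply Finset.Subset.antisymm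
    · intro x hx
      obtain ⟨hxT, hxB⟩ := Finset.mem_inter.mp hx
      have : x ∈ X ∩ B := Finset.mem_inter.mpr ⟨hTX hxT, hxB⟩
      rw [hXB] at this
      exact this
    · intro x hx
      rw [Finset.mem_singleton] at hx
      subst hx
      exact Finset.mem_inter.mpr ⟨hb0T, hb0B⟩
  -- at most one neighbor of b0 misses T
  have key : ∀ a' ∈ G.neighborFinset b0 \ T, X = insert b0 (A.erase a') := by
    intro a' ha'
    obtain ⟨hadj', ha'T⟩ := Finset.mem_sdiff.mp ha'
    rw [SimpleGraph.mem_neighborFinset] at hadj'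
    have ha'A : a' ∈ A := hNB b0 hb0B a' hadj'
    have hcov' := hCa a' ha'A b0 hb0B hadj'.symm
    have hcardC' : (insert b0 (A.erase a')).card = A.card := by
      rw [Finset.card_insert_of_notMem
          (fun h => hAB' _ (Finset.mem_of_mem_erase h) hb0B),
        Finset.card_erase_of_mem ha'A]
      have : 0 < A.card := Finset.card_pos.mpr ⟨a', ha'A⟩
      omega
    have hmin' : IsMinVertexCover G (insert b0 (A.erase a')) := by
      refine ⟨hcov', fun D hD => ?_⟩
      rw [hcardC']
      exact hlow D hD
    have hTsub : T ⊆ insert b0 (A.erase a') := by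
      intro t ht
      have htX := hTX ht
      rw [hXeq] at htX
      rcases Finset.mem_insert.mp htX with h | h
      · exact h ▸ Finset.mem_insert_self _ _
      · obtain ⟨_, htA⟩ := Finset.mem_erase.mp h
        have hne : t ≠ a' := fun e => ha'T (e ▸ ht)
        exact Finset.mem_insert_of_mem (Finset.mem_erase.mpr ⟨hne, htA⟩)
    exact (hXuniq _ ⟨hmin', hTsub⟩).symm
  have hNb : (G.neighborFinset b0 \ T).card ≤ 1 := by
    rw [Finset.card_le_one]
    intro a1 h1 a2 h2
    by_contra hne
    have e12 : insert b0 (A.erase a1) = insert b0 (A.erase a2) :=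
      (key a1 h1).symm.trans (key a2 h2)
    have ha2adj : G.Adj b0 a2 := by
      have := (Finset.mem_sdiff.mp h2).1
      rwa [SimpleGraph.mem_neighborFinset] at this
    have ha2A : a2 ∈ A := hNB b0 hb0B a2 ha2adj
    have hmem2 : a2 ∈ insert b0 (A.erase a1) :=
      Finset.mem_insert_of_mem
        (Finset.mem_erase.mpr ⟨fun e => hne e.symm, ha2A⟩)
    rw [e12] at hmem2
    rcases Finset.mem_insert.mp hmem2 with h | h
    · exact hAB' a2 ha2A (h ▸ hb0B)
    · exact (Finset.mem_erase.mp h).1 rfl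
  -- |N(b0)| ≤ |T|
  have hfinal : (G.neighborFinset b0).card ≤ T.card := by
    have h1 : (G.neighborFinset b0 ∩ T).card + (G.neighborFinset b0 \ T).card
        = (G.neighborFinset b0).card := Finset.card_inter_add_card_sdiff _ _
    have hb0not : b0 ∉ G.neighborFinset b0 ∩ T := by
      simp [SimpleGraph.mem_neighborFinset]
    have hsubT : insert b0 (G.neighborFinset b0 ∩ T) ⊆ T := by
      intro x hx
      rcases Finset.mem_insert.mp hx with h | h
      · exact h ▸ hb0T
      · exact (Finset.mem_inter.mp h).2
    have h2 := Finset.card_le_card hsubT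
    rw [Finset.card_insert_of_notMem hb0not] at h2
    omega
  exact ⟨b0, hb0B, hTBeq, hNb, hfinal⟩
end

section
/- Let G be a finite simple graph whose vertex set is partitioned into a clique A and a nonempty independent set B, such that G has no isolated vertices and every vertex of A has exactly one neighbor in B. Let b* ∈ B be a vertex minimizing |N_G(b*)| over B, and let v ∈ N_G(b*). Then S* = (N_G(b*) \ {v}) ∪ {b*} satisfies: (i) there is exactly one minimum vertex cover of G containing S*; and (ii) every T ⊆ V(G) for which there is exactly one minimum vertex cover of G containing T satisfies |T| ≥ |S*| = |N_G(b*)|. Hence S* is an optimal solution of PAU-VC on G. -/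
/-- In a split graph with clique `A` and nonempty independent set `B`, with no isolated
vertices and every vertex of `A` having exactly one neighbor in `B`, let `b* ∈ B`
minimize `|N_G(b*)|` over `B` and let `v ∈ N_G(b*)`. Then
`S* = (N_G(b*) \ {v}) ∪ {b*}` satisfies: (i) there is exactly one minimum vertex cover
of `G` containing `S*`; and (ii) every `T` admitting exactly one minimum vertex cover
containing it satisfies `|T| ≥ |S*| = |N_G(b*)|`. Hence `S*` is an optimal solution of
PAU-VC on `G`. -/
theorem stmt12 {V : Type*} [Fintype V] [DecidableEq V] (G : SimpleGraph V)
    [DecidableRel G.Adj] (A B : Finset V)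
    (hAB : Disjoint A B) (hunion : A ∪ B = Finset.univ)
    (hA : ∀ u ∈ A, ∀ v ∈ A, u ≠ v → G.Adj u v)
    (hB : ∀ u ∈ B, ∀ v ∈ B, ¬ G.Adj u v)
    (hBne : B.Nonempty)
    (hiso : ∀ w : V, ∃ u : V, G.Adj w u)
    (hone : ∀ a ∈ A, ∃! b : V, b ∈ B ∧ G.Adj a b)
    (bs : V) (hbs : bs ∈ B)
    (hmin : ∀ b ∈ B, (G.neighborFinset bs).card ≤ (G.neighborFinset b).card)
    (v : V) (hv : v ∈ G.neighborFinset bs) :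
    (∃! X : Finset V, IsMinVertexCover G X ∧
        insert bs ((G.neighborFinset bs).erase v) ⊆ X) ∧
    (insert bs ((G.neighborFinset bs).erase v)).card = (G.neighborFinset bs).card ∧
    (∀ T : Finset V, (∃! X : Finset V, IsMinVertexCover G X ∧ T ⊆ X) →
      (insert bs ((G.neighborFinset bs).erase v)).card ≤ T.card) := by
  classical
  have hmemAB : ∀ x : V, x ∈ A ∨ x ∈ B := by
    intro x
    have hx : x ∈ A ∪ B := by rw [hunion]; exact Finset.mem_univ x
    exact Finset.mem_union.mp hx
  have hdisj : ∀ x, x ∈ A → x ∉ B := fun x hx => Finset.disjoint_left.mp hAB hx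
  have hNsub : ∀ b ∈ B, G.neighborFinset b ⊆ A := by
    intro b hb u hu
    rw [SimpleGraph.mem_neighborFinset] at hu
    rcases hmemAB u with h | h
    · exact h
    · exact absurd hu (hB b hb u h)
  have hcoverA : IsVertexCover G A := by
    intro u w huw
    rcases hmemAB u with h | h
    · exact Or.inl h
    · rcases hmemAB w with h' | h'
      · exact Or.inr h'
      · exact absurd huw (hB u h w h')
  have huniqB : ∀ a ∈ A, ∀ b ∈ B, G.Adj a b → ∀ b' ∈ B, G.Adj a b' → b' = b := by
    intro a ha b hb hab b' hb' hab'
    obtain ⟨c, _, hc⟩ := hone a ha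
    rw [hc b' ⟨hb', hab'⟩, hc b ⟨hb, hab⟩]
  -- the sets insert b (A.erase a) are vertex covers of the right size
  have hminY : ∀ a ∈ A, ∀ b ∈ B, G.Adj a b →
      IsVertexCover G (insert b (A.erase a)) ∧ (insert b (A.erase a)).card = A.card := by
    intro a ha b hb hab
    have hbA : b ∉ A.erase a := fun h => hdisj b (Finset.mem_of_mem_erase h) hb
    have hcard : (insert b (A.erase a)).card = A.card := by
      rw [Finset.card_insert_of_notMem hbA, Finset.card_erase_of_mem ha]
      have h1 : 1 ≤ A.card := Finset.card_pos.mpr ⟨a, ha⟩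
      omega
    have key : ∀ u w : V, G.Adj u w → u ∈ A →
        u ∈ insert b (A.erase a) ∨ w ∈ insert b (A.erase a) := by
      intro u w huw hu
      by_cases hua : u = a
      · subst hua
        rcases hmemAB w with hw | hw
        · exact Or.inr (Finset.mem_insert_of_mem (Finset.mem_erase.mpr ⟨huw.ne', hw⟩))
        · have hwb : w = b := huniqB u hu b hb hab w hw huw
          exact Or.inr (by rw [hwb]; exact Finset.mem_insert_self b _)
      · exact Or.inl (Finset.mem_insert_of_mem (Finset.mem_erase.mpr ⟨hua, hu⟩))
    refine ⟨?_, hcard⟩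
    intro u w huw
    rcases hmemAB u with hu | hu
    · exact key u w huw hu
    · rcases hmemAB w with hw | hw
      · exact (key w u huw.symm hw).symm
      · exact absurd huw (hB u hu w hw)
  -- pinning lemma: a cover missing a ∈ A contains insert b (A.erase a)
  have hpin : ∀ D : Finset V, IsVertexCover G D → ∀ a ∈ A, a ∉ D →
      ∃ b ∈ B, G.Adj a b ∧ insert b (A.erase a) ⊆ D ∧
        (insert b (A.erase a)).card = A.card := by
    intro D hD a ha haD
    obtain ⟨b, ⟨hbB, hab⟩, _⟩ := hone a ha
    have hbD : b ∈ D := by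
      rcases hD hab with h | h
      · exact absurd h haD
      · exact h
    have hsub : A.erase a ⊆ D := by
      intro a' ha'
      have hne := Finset.ne_of_mem_erase ha'
      have ha'A := Finset.mem_of_mem_erase ha'
      rcases hD (hA a ha a' ha'A (Ne.symm hne)) with h | h
      · exact absurd h haD
      · exact h
    exact ⟨b, hbB, hab, Finset.insert_subset hbD hsub, (hminY a ha b hbB hab).2⟩
  have hlb : ∀ D : Finset V, IsVertexCover G D → A.card ≤ D.card := by
    intro D hD
    by_cases hAD : A ⊆ D
    · exact Finset.card_le_card hAD
    · obtain ⟨a, ha, haD⟩ := Finset.not_subset.mp hAD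
      obtain ⟨b, hbB, hab, hsub, hcard⟩ := hpin D hD a ha haD
      calc A.card = (insert b (A.erase a)).card := hcard.symm
        _ ≤ D.card := Finset.card_le_card hsub
  have hminA : IsMinVertexCover G A := ⟨hcoverA, hlb⟩
  have hminY' : ∀ a ∈ A, ∀ b ∈ B, G.Adj a b →
      IsMinVertexCover G (insert b (A.erase a)) := by
    intro a ha b hb hab
    obtain ⟨hc, hcard⟩ := hminY a ha b hb hab
    exact ⟨hc, fun D hD => hcard ▸ hlb D hD⟩
  -- characterization of minimum vertex covers
  have hchar : ∀ X : Finset V, IsMinVertexCover G X →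
      X = A ∨ ∃ a, a ∈ A ∧ ∃ b, b ∈ B ∧ G.Adj a b ∧ X = insert b (A.erase a) := by
    intro X hX
    have hXcard : X.card = A.card := le_antisymm (hX.2 A hcoverA) (hlb X hX.1)
    by_cases hAX : A ⊆ X
    · exact Or.inl (Finset.eq_of_subset_of_card_le hAX (le_of_eq hXcard)).symm
    · obtain ⟨a, ha, haX⟩ := Finset.not_subset.mp hAX
      obtain ⟨b, hbB, hab, hsub, hcard⟩ := hpin X hX.1 a ha haX
      exact Or.inr ⟨a, ha, b, hbB, hab,
        (Finset.eq_of_subset_of_card_le hsub (by omega)).symm⟩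
  -- basic facts about bs and v
  have hadjbsv : G.Adj bs v := (SimpleGraph.mem_neighborFinset G bs v).mp hv
  have hvA : v ∈ A := hNsub bs hbs hv
  have hbsNotA : bs ∉ A := fun h => hdisj bs h hbs
  -- the cardinality claim (ii)
  have hbsN : bs ∉ (G.neighborFinset bs).erase v := by
    intro h
    exact G.irrefl ((SimpleGraph.mem_neighborFinset G bs bs).mp (Finset.mem_of_mem_erase h))
  have hScard : (insert bs ((G.neighborFinset bs).erase v)).card
      = (G.neighborFinset bs).card := by
    rw [Finset.card_insert_of_notMem hbsN, Finset.card_erase_of_mem hv]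
    have h1 : 1 ≤ (G.neighborFinset bs).card := Finset.card_pos.mpr ⟨v, hv⟩
    omega
  refine ⟨?_, hScard, ?_⟩
  · -- (i) unique minimum vertex cover containing S*
    refine ⟨insert bs (A.erase v), ⟨hminY' v hvA bs hbs hadjbsv.symm, ?_⟩, ?_⟩
    · exact Finset.insert_subset_insert bs (Finset.erase_subset_erase v (hNsub bs hbs))
    · rintro Y ⟨hYmin, hSY⟩
      have hbsY : bs ∈ Y := hSY (Finset.mem_insert_self bs _)
      rcases hchar Y hYmin with rfl | ⟨a, ha, b, hb, hab, rfl⟩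
      · exact absurd hbsY hbsNotA
      · have hbsb : bs = b := by
          rcases Finset.mem_insert.mp hbsY with h | h
          · exact h
          · exact absurd (Finset.mem_of_mem_erase h) hbsNotA
        subst hbsb
        have haN : a ∈ G.neighborFinset bs := (SimpleGraph.mem_neighborFinset G bs a).mpr hab.symm
        have hav : a = v := by
          by_contra hav
          have haS : a ∈ insert bs ((G.neighborFinset bs).erase v) :=
            Finset.mem_insert_of_mem (Finset.mem_erase.mpr ⟨hav, haN⟩)
          have haY := hSY haS
          rcases Finset.mem_insert.mp haY with h | h
          · exact hdisj a ha (h ▸ hbs)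
          · exact (Finset.notMem_erase a A) h
        rw [hav]
  · -- (iii) lower bound
    intro T hT
    obtain ⟨X, ⟨hXmin, hTX⟩, huniq⟩ := hT
    rw [hScard]
    by_cases hTB : ∃ b ∈ T, b ∈ B
    · obtain ⟨b, hbT, hbB⟩ := hTB
      have hbX : b ∈ X := hTX hbT
      have hbNotA : b ∉ A := fun h => hdisj b h hbB
      rcases hchar X hXmin with rfl | ⟨a₀, ha₀, b₀, hb₀, hab₀, rfl⟩
      · exact absurd hbX hbNotA
      · have hbb₀ : b = b₀ := by
          rcases Finset.mem_insert.mp hbX with h | h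
          · exact h
          · exact absurd (Finset.mem_of_mem_erase h) hbNotA
        subst hbb₀
        have ha₀N : a₀ ∈ G.neighborFinset b :=
          (SimpleGraph.mem_neighborFinset G b a₀).mpr hab₀.symm
        have hsubT : (G.neighborFinset b).erase a₀ ⊆ T := by
          intro a' ha'
          have ha'ne := Finset.ne_of_mem_erase ha'
          have ha'N := Finset.mem_of_mem_erase ha'
          have ha'A : a' ∈ A := hNsub b hbB ha'N
          have hadj' : G.Adj a' b := ((SimpleGraph.mem_neighborFinset G b a').mp ha'N).symm
          by_contra ha'T
          have hYmin := hminY' a' ha'A b hbB hadj'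
          have hTY : T ⊆ insert b (A.erase a') := by
            intro t ht
            rcases Finset.mem_insert.mp (hTX ht) with h | h
            · exact by rw [h]; exact Finset.mem_insert_self b _
            · refine Finset.mem_insert_of_mem (Finset.mem_erase.mpr ⟨?_, Finset.mem_of_mem_erase h⟩)
              intro he
              exact ha'T (he ▸ ht)
          have hYX := huniq (insert b (A.erase a')) ⟨hYmin, hTY⟩
          have ha₀Y : a₀ ∈ insert b (A.erase a') :=
            Finset.mem_insert_of_mem (Finset.mem_erase.mpr ⟨Ne.symm ha'ne, ha₀⟩)
          rw [hYX] at ha₀Y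
          rcases Finset.mem_insert.mp ha₀Y with h | h
          · exact hdisj a₀ ha₀ (h ▸ hbB)
          · exact (Finset.notMem_erase a₀ A) h
        have hbNE : b ∉ (G.neighborFinset b).erase a₀ := by
          intro h
          exact G.irrefl ((SimpleGraph.mem_neighborFinset G b b).mp (Finset.mem_of_mem_erase h))
        have hins : insert b ((G.neighborFinset b).erase a₀) ⊆ T :=
          Finset.insert_subset hbT hsubT
        have hc : (insert b ((G.neighborFinset b).erase a₀)).card = (G.neighborFinset b).card := by
          rw [Finset.card_insert_of_notMem hbNE, Finset.card_erase_of_mem ha₀N]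
          have h1 : 1 ≤ (G.neighborFinset b).card := Finset.card_pos.mpr ⟨a₀, ha₀N⟩
          omega
        calc (G.neighborFinset bs).card ≤ (G.neighborFinset b).card := hmin b hbB
          _ = (insert b ((G.neighborFinset b).erase a₀)).card := hc.symm
          _ ≤ T.card := Finset.card_le_card hins
    · push_neg at hTB
      have hTA : T ⊆ A := by
        intro t ht
        rcases hmemAB t with h | h
        · exact h
        · exact absurd h (hTB t ht)
      have hAT : A ⊆ T := by
        intro a ha
        by_contra haT
        have hXA : A = X := huniq A ⟨hminA, hTA⟩
        obtain ⟨b, ⟨hbB, hab⟩, _⟩ := hone a ha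
        have hTY : T ⊆ insert b (A.erase a) := by
          intro t ht
          refine Finset.mem_insert_of_mem (Finset.mem_erase.mpr ⟨?_, hTA ht⟩)
          intro he
          exact haT (he ▸ ht)
        have hYX := huniq (insert b (A.erase a)) ⟨hminY' a ha b hbB hab, hTY⟩
        have hbY : b ∈ insert b (A.erase a) := Finset.mem_insert_self b _
        rw [hYX, ← hXA] at hbY
        exact hdisj b hbY hbB
      calc (G.neighborFinset bs).card ≤ A.card := Finset.card_le_card (hNsub bs hbs)
        _ ≤ T.card := Finset.card_le_card hAT
end

section
/- Let k be a positive integer, α and β finite types, G a simple graph on α with labeling lab_G : α → Fin k, H a simple graph on β with labeling lab_H : β → Fin k, and M ⊆ Fin k × Fin k. Let F be the M-product of (G, lab_G) and (H, lab_H). Then a set T ⊆ α ⊕ β is a vertex cover of F if and only if T_G = {a : inl a ∈ T} is a vertex cover of G, T_H = {b : inr b ∈ T} is a vertex cover of H, and for every (i, j) ∈ M, either lab_G⁻¹(i) ⊆ T_G or lab_H⁻¹(j) ⊆ T_H. -/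
/-- The `M`-product of the `k`-labeled graphs `(G, labG)` and `(H, labH)`: the graph on
`α ⊕ β` in which `inl u, inl v` are adjacent iff `u, v` are adjacent in `G`,
`inr u, inr v` are adjacent iff `u, v` are adjacent in `H`, and `inl u, inr v` are
adjacent iff `(labG u, labH v) ∈ M`. -/
def MProduct {k : ℕ} {α β : Type*} (G : SimpleGraph α) (H : SimpleGraph β)
    (labG : α → Fin k) (labH : β → Fin k) (M : Set (Fin k × Fin k)) :
    SimpleGraph (α ⊕ β) where
  Adj x y :=
    match x, y with
    | Sum.inl u, Sum.inl v => G.Adj u v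
    | Sum.inr u, Sum.inr v => H.Adj u v
    | Sum.inl u, Sum.inr v => (labG u, labH v) ∈ M
    | Sum.inr u, Sum.inl v => (labG v, labH u) ∈ M
  symm := by
    constructor
    rintro (u | u) (v | v) h
    · exact G.adj_symm h
    · exact h
    · exact h
    · exact H.adj_symm h
  loopless := by
    constructor
    rintro (u | u) h
    · exact G.irrefl h
    · exact H.irrefl h

/-- The left part `T_G = {a : inl a ∈ T}` of a set of vertices of a sum type. -/
def leftPart {α β : Type*} [Fintype α] [DecidableEq α] [DecidableEq β]
    (T : Finset (α ⊕ β)) : Finset α :=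
  Finset.univ.filter (fun a => Sum.inl a ∈ T)

/-- The right part `T_H = {b : inr b ∈ T}` of a set of vertices of a sum type. -/
def rightPart {α β : Type*} [Fintype β] [DecidableEq α] [DecidableEq β]
    (T : Finset (α ⊕ β)) : Finset β :=
  Finset.univ.filter (fun b => Sum.inr b ∈ T)

/-- The preimage `lab⁻¹(i)` of a label `i` under a labeling. -/
def labelClass {k : ℕ} {γ : Type*} [Fintype γ] (lab : γ → Fin k) (i : Fin k) :
    Finset γ :=
  Finset.univ.filter (fun v => lab v = i)

/-- `full(X) = {i : lab⁻¹(i) ⊆ X}` for a `k`-labeled graph with labeling `lab`. -/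
def fullSet {k : ℕ} {γ : Type*} [Fintype γ] [DecidableEq γ] (lab : γ → Fin k)
    (X : Finset γ) : Finset (Fin k) :=
  Finset.univ.filter (fun i => labelClass lab i ⊆ X)

/-- A set `T` is a vertex cover of the `M`-product `F` of `(G, labG)` and `(H, labH)`
iff its left part is a vertex cover of `G`, its right part is a vertex cover of `H`,
and for every `(i, j) ∈ M`, either `labG⁻¹(i) ⊆ T_G` or `labH⁻¹(j) ⊆ T_H`. -/
theorem stmt13 (k : ℕ) (hk : 0 < k) {α β : Type*}
    [Fintype α] [Fintype β] [DecidableEq α] [DecidableEq β]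
    (G : SimpleGraph α) (H : SimpleGraph β)
    (labG : α → Fin k) (labH : β → Fin k) (M : Set (Fin k × Fin k))
    (T : Finset (α ⊕ β)) :
    IsVertexCover (MProduct G H labG labH M) T ↔
      (IsVertexCover G (leftPart T) ∧ IsVertexCover H (rightPart T) ∧
        ∀ p ∈ M, labelClass labG p.1 ⊆ leftPart T ∨
          labelClass labH p.2 ⊆ rightPart T) := by
  simp only [IsVertexCover, leftPart, rightPart, labelClass, Finset.subset_iff,
    Finset.mem_filter, Finset.mem_univ, true_and]
  constructor
  · intro h
    refine ⟨fun u v huv => h (u := Sum.inl u) (v := Sum.inl v) huv,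
      fun u v huv => h (u := Sum.inr u) (v := Sum.inr v) huv, ?_⟩
    intro p hp
    by_cases hG : ∀ a, labG a = p.1 → Sum.inl a ∈ T
    · exact Or.inl hG
    · push_neg at hG
      obtain ⟨a, ha, haT⟩ := hG
      refine Or.inr fun b hb => ?_
      have : (MProduct G H labG labH M).Adj (Sum.inl a) (Sum.inr b) := by
        show (labG a, labH b) ∈ M
        rw [ha, hb]
        exact hp
      exact (h this).resolve_left haT
  · rintro ⟨hG, hH, hM⟩ (u | u) (v | v) huv
    · exact hG huv
    · rcases hM _ huv with h | h
      · exact Or.inl (h rfl)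
      · exact Or.inr (h rfl)
    · rcases hM _ huv with h | h
      · exact Or.inr (h rfl)
      · exact Or.inl (h rfl)
    · exact hH huv
end
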